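/- arXiv:1004.3695 — 2 statements merged into one kernel-verified Lean document; each statement's English description precedes it below -/
import Mathlib

section
/- For any odd positive integer n, the number of elements of exact order n in the group (Z/nZ) × (Z/nZ) equals ψ(n), where ψ is the multiplicative arithmetic function determined by ψ(p^r) = p^{2r-2}(p^2 - 1) for primes p and r ≥ 1, and ψ(1) = 1. -/
/-!
Both sides are multiplicative in `n`. For the count this is the Chinese remainder theorem:
`(ℤ/abℤ)² ≅ (ℤ/aℤ)² × (ℤ/bℤ)²`, and for coprime `a`, `b` a pair has order `ab` exactly when
its components have orders `a` and `b`. At a prime power, `x` has order `p^(r+1)` iff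
`p^r • x ≠ 0`, and the kernel of `p^r •` on `(ℤ/p^(r+1)ℤ)²` has `p^(2r)` elements, leaving
`p^(2r+2) - p^(2r)` elements of exact order `p^(r+1)`.
-/

/-- The multiplicative arithmetic function `ψ` with `ψ(1) = 1` and
`ψ(p^r) = p^(2r-2) * (p² - 1)` for every prime `p` and `r ≥ 1`. -/
def psi (n : ℕ) : ℕ :=
  n.factorization.prod fun p r => p ^ (2 * r - 2) * (p ^ 2 - 1)

section AddOrder

variable {G H : Type*}

lemma addOrderOf_eq_prime_pow_iff [AddMonoid G] {p r : ℕ} [hp : Fact p.Prime] {x : G}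
    (hx : p ^ (r + 1) • x = 0) : addOrderOf x = p ^ (r + 1) ↔ p ^ r • x ≠ 0 := by
  refine ⟨fun h => nsmul_ne_zero_of_lt_addOrderOf (pow_ne_zero _ hp.out.ne_zero) ?_,
    fun h => addOrderOf_eq_prime_pow h hx⟩
  rw [h]
  exact Nat.pow_lt_pow_right hp.out.one_lt r.lt_succ_self

lemma Prod.addOrderOf_eq_mul_iff [AddMonoid G] [AddMonoid H] {a b : ℕ} (hab : a.Coprime b)
    {x : G × H} (ha : addOrderOf x.1 ∣ a) (hb : addOrderOf x.2 ∣ b) :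
    addOrderOf x = a * b ↔ addOrderOf x.1 = a ∧ addOrderOf x.2 = b := by
  rw [Prod.addOrderOf]
  refine ⟨fun h => ⟨?_, ?_⟩, fun ⟨h₁, h₂⟩ => by rw [h₁, h₂, hab.lcm_eq_mul]⟩
  · -- `a` divides `lcm (o₁, o₂) ∣ o₁ * o₂` and is coprime to `o₂ ∣ b`, so `a ∣ o₁`.
    refine Nat.dvd_antisymm ha ((hab.coprime_dvd_right hb).dvd_of_dvd_mul_right ?_)
    exact (Dvd.intro b h.symm).trans (Nat.lcm_dvd_mul _ _)
  · refine Nat.dvd_antisymm hb ((hab.symm.coprime_dvd_right ha).dvd_of_dvd_mul_left ?_)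
    exact (Dvd.intro_left a h.symm).trans (Nat.lcm_dvd_mul _ _)

lemma Nat.card_prod_nsmul_eq_zero [AddMonoid G] [AddMonoid H] (d : ℕ) :
    Nat.card {x : G × H // d • x = 0} =
      Nat.card {x : G // d • x = 0} * Nat.card {y : H // d • y = 0} := by
  rw [← Nat.card_prod]
  exact Nat.card_congr ((Equiv.subtypeEquivRight fun _ => Prod.ext_iff).trans
    (Equiv.subtypeProdEquivProd (p := fun x : G => d • x = 0) (q := fun y : H => d • y = 0)))

end AddOrder

namespace ZMod

lemma addOrderOf_prod_dvd (n : ℕ) (x : ZMod n × ZMod n) : addOrderOf x ∣ n :=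
  addOrderOf_dvd_of_nsmul_eq_zero (by ext <;> simp)

lemma card_nsmul_eq_zero_of_dvd {n d : ℕ} [NeZero n] (hd : d ∣ n) :
    Nat.card {x : ZMod n // d • x = 0} = d := by
  have := IsAddCyclic.card_nsmulAddMonoidHom_ker (ZMod n) d
  rwa [Nat.card_zmod, Nat.gcd_eq_right hd] at this

lemma card_addOrderOf_eq_one :
    Nat.card {x : ZMod 1 × ZMod 1 // addOrderOf x = 1} = 1 := by
  rw [Nat.card_eq_one_iff_unique]
  exact ⟨inferInstance, ⟨⟨0, addOrderOf_zero⟩⟩⟩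

lemma card_addOrderOf_eq_prime_pow {p r : ℕ} (hp : p.Prime) :
    Nat.card {x : ZMod (p ^ (r + 1)) × ZMod (p ^ (r + 1)) // addOrderOf x = p ^ (r + 1)} =
      p ^ (2 * r) * (p ^ 2 - 1) := by
  have := Fact.mk hp
  classical
  have hker : Nat.card {x : ZMod (p ^ (r + 1)) × ZMod (p ^ (r + 1)) // p ^ r • x = 0} =
      p ^ (2 * r) := by
    rw [Nat.card_prod_nsmul_eq_zero, card_nsmul_eq_zero_of_dvd (pow_dvd_pow p r.le_succ),
      ← pow_two, ← pow_mul, mul_comm]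
  have hexact (x : ZMod (p ^ (r + 1)) × ZMod (p ^ (r + 1))) :
      addOrderOf x = p ^ (r + 1) ↔ ¬ p ^ r • x = 0 :=
    addOrderOf_eq_prime_pow_iff (addOrderOf_dvd_iff_nsmul_eq_zero.mp (addOrderOf_prod_dvd _ x))
  have htotal : p ^ (r + 1) * p ^ (r + 1) = p ^ (2 * r) * p ^ 2 := by ring
  rw [Nat.card_congr (Equiv.subtypeEquivRight hexact), Nat.card_eq_fintype_card,
    Fintype.card_subtype_compl, ← Nat.card_eq_fintype_card, ← Nat.card_eq_fintype_card, hker,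
    Nat.card_prod, Nat.card_zmod, htotal, Nat.mul_sub_one]

lemma card_addOrderOf_eq_mul {a b : ℕ} (hab : a.Coprime b) :
    Nat.card {x : ZMod (a * b) × ZMod (a * b) // addOrderOf x = a * b} =
      Nat.card {x : ZMod a × ZMod a // addOrderOf x = a} *
        Nat.card {y : ZMod b × ZMod b // addOrderOf y = b} := by
  let crt : ZMod (a * b) ≃+ ZMod a × ZMod b := (chineseRemainder hab).toAddEquiv
  let e : ZMod (a * b) × ZMod (a * b) ≃+ (ZMod a × ZMod a) × (ZMod b × ZMod b) :=
    (crt.prodCongr crt).trans (AddEquiv.prodProdProdComm _ _ _ _)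
  rw [← Nat.card_prod]
  refine Nat.card_congr ((e.toEquiv.subtypeEquiv fun x => ?_).trans
    (Equiv.subtypeProdEquivProd ..))
  rw [← Prod.addOrderOf_eq_mul_iff hab (addOrderOf_prod_dvd _ _) (addOrderOf_prod_dvd _ _),
    ← e.addOrderOf_eq x]
  rfl

end ZMod

theorem stmt7_general (n : ℕ) (hpos : 0 < n) :
    Nat.card {x : ZMod n × ZMod n // addOrderOf x = n} = psi n := by
  rw [Nat.multiplicative_factorization (fun m => Nat.card {x : ZMod m × ZMod m // addOrderOf x = m})
    (fun _ _ => ZMod.card_addOrderOf_eq_mul) ZMod.card_addOrderOf_eq_one hpos.ne', psi]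
  refine Finsupp.prod_congr fun p hp => ?_
  obtain ⟨r, hr⟩ := Nat.exists_eq_add_one_of_ne_zero (Finsupp.mem_support_iff.mp hp)
  rw [hr, ZMod.card_addOrderOf_eq_prime_pow (Nat.prime_of_mem_primeFactors hp), mul_add_one,
    Nat.add_sub_cancel]

/-- For odd positive `n`, the number of elements of exact (additive) order `n` in
`(ℤ/nℤ) × (ℤ/nℤ)` equals `ψ(n)`. -/
theorem stmt7 (n : ℕ) (hn : Odd n) (hpos : 0 < n) :
    Nat.card {x : ZMod n × ZMod n // addOrderOf x = n} = psi n :=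
  stmt7_general n hpos
end

section
/- The elliptic curve E: Y^2 + Y = X^3 over F_2 has exactly 3 points over F_2 (two affine points (0,0), (0,1) and the point at infinity), and more generally exactly 2^d + 1 points over F_{2^d} for every odd positive integer d. -/
/-- The elliptic curve `Y² + Y = X³` over a field of characteristic 2, as a Weierstrass
curve with coefficients `a₁ = a₂ = a₄ = a₆ = 0`, `a₃ = 1`. -/
noncomputable def Wss (k : Type*) [Field k] : WeierstrassCurve.Affine k :=
  { a₁ := 0, a₂ := 0, a₃ := 1, a₄ := 0, a₆ := 0 }

/-!
Over a finite field `k` of characteristic different from 3 (so that the curve is smooth) whose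
unit group has order prime to 3, cubing is a bijection of `k`. So for every `y` the equation
`y² + y = x³` has exactly one solution `x`, and `Y² + Y = X³` has exactly `#k` affine points,
plus the point at infinity. For `k = 𝔽_{2^d}` the condition reads `3 ∤ 2^d - 1`, which holds
exactly when `d` is odd.
-/

lemma pow_bijective_of_coprime_card_units {G₀ : Type*} [GroupWithZero G₀] [Finite G₀] {n : ℕ}
    (hn : n ≠ 0) (h : (Nat.card G₀ˣ).Coprime n) : Function.Bijective fun a : G₀ => a ^ n := by
  refine Finite.surjective_iff_bijective.mp fun b => ?_
  rcases eq_or_ne b 0 with rfl | hb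
  · exact ⟨0, zero_pow hn⟩
  · obtain ⟨u, hu⟩ := h.pow_left_bijective.surjective (Units.mk0 b hb)
    exact ⟨u, by simpa using congrArg Units.val hu⟩

lemma coprime_two_pow_sub_one_three {d : ℕ} (hd : Odd d) : (2 ^ d - 1).Coprime 3 := by
  obtain ⟨m, rfl⟩ := hd
  have h4 : 4 ^ m % 3 = 1 := by rw [Nat.pow_mod]; simp
  have hmod : 2 ^ (2 * m + 1) % 3 = 2 := by
    rw [pow_succ, pow_mul, Nat.mul_mod, show 2 ^ 2 = 4 from rfl, h4]
  have hpos : 1 ≤ 2 ^ (2 * m + 1) := Nat.one_le_two_pow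
  rw [Nat.Coprime, Nat.gcd_comm, Nat.gcd_rec, show (2 ^ (2 * m + 1) - 1) % 3 = 1 by omega]
  rfl

namespace Wss

variable {k : Type*} [Field k]

lemma isElliptic (h3 : (3 : k) ≠ 0) : (Wss k).IsElliptic := by
  have hΔ : (Wss k).Δ = -3 ^ 3 := by
    norm_num [Wss, WeierstrassCurve.Δ, WeierstrassCurve.b₂, WeierstrassCurve.b₄,
      WeierstrassCurve.b₆, WeierstrassCurve.b₈]
  exact ⟨hΔ ▸ (pow_ne_zero 3 h3).isUnit.neg⟩

lemma equation_iff (x y : k) : (Wss k).Equation x y ↔ y ^ 2 + y = x ^ 3 := by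
  rw [WeierstrassCurve.Affine.equation_iff]
  simp [Wss]

noncomputable def equationEquiv [Finite k] (h : (Nat.card kˣ).Coprime 3) :
    {xy : k × k // (Wss k).Equation xy.1 xy.2} ≃ k :=
  have hcube := pow_bijective_of_coprime_card_units three_ne_zero h
  Equiv.ofBijective (fun xy => xy.1.2)
    ⟨by
      rintro ⟨⟨x, y⟩, hxy⟩ ⟨⟨x', y'⟩, hxy'⟩ (rfl : y = y')
      rw [equation_iff] at hxy hxy'
      obtain rfl : x = x' := hcube.injective (hxy.symm.trans hxy')
      rfl,
    fun y => by
      obtain ⟨x, hx⟩ := hcube.surjective (y ^ 2 + y)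
      exact ⟨⟨(x, y), (equation_iff x y).mpr hx.symm⟩, rfl⟩⟩

lemma card_point [Finite k] (h3 : (3 : k) ≠ 0) (h : (Nat.card k - 1).Coprime 3) :
    Nat.card (Wss k).Point = Nat.card k + 1 := by
  have := isElliptic h3
  rw [← Nat.card_units] at h
  rw [Nat.card_congr (((Wss k).pointEquiv).trans (equationEquiv h).optionCongr),
    Finite.card_option]

end Wss

lemma three_ne_zero_of_charP_two (R : Type*) [AddMonoidWithOne R] [CharP R 2] : (3 : R) ≠ 0 := by
  exact_mod_cast (CharP.cast_eq_zero_iff R 2 3).not.mpr (by decide)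

/-- The curve `Y² + Y = X³` has exactly 3 points over `F₂` and, more generally, exactly
`2^d + 1` points over `F_{2^d}` for every odd positive integer `d`. -/
theorem stmt13 :
    Nat.card (Wss (ZMod 2)).Point = 3 ∧
      ∀ d : ℕ, Odd d → 0 < d → Nat.card (Wss (GaloisField 2 d)).Point = 2 ^ d + 1 := by
  constructor
  · rw [Wss.card_point (three_ne_zero_of_charP_two _) (by simp), Nat.card_zmod]
  · intro d hd hd0
    have hq : Nat.card (GaloisField 2 d) = 2 ^ d := GaloisField.card 2 d hd0.ne'
    rw [Wss.card_point (three_ne_zero_of_charP_two _)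
      (hq ▸ coprime_two_pow_sub_one_three hd), hq]
end
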